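/- Let Σ and Λ be alphabets, let L be a positive integer, let A : Σ → Λ^L assign to each symbol a block of length L, and let a = a_1 ⋯ a_n ∈ Σ^n and b = b_1 ⋯ b_m ∈ Σ^m. Assume α ∈ (0, 1/7), R > 0, and that f̄(C, D) ≥ α for all substrings C of A(a_i) and D of A(b_j) consisting of consecutive symbols with a_i ≠ b_j and |C|, |D| ≥ L/R. Then, with f̃ = f̃(a_1 a_2 ⋯ a_n, b_1 b_2 ⋯ b_m), we have f̄(A(a_1)A(a_2)⋯A(a_n), A(b_1)A(b_2)⋯A(b_m)) > α·f̃ − 2/R. -/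

import Mathlib

open MeasureTheory

namespace Paper

variable {σ : Type*}

/-- The concatenation of `t` copies of the string `w`. -/
def rep (w : List σ) (t : ℕ) : List σ := (List.replicate t w).flatten

/-- `I` is a match between the strings `a` and `b` (with 0-based indices):
a collection of pairs of indices, strictly increasing in both coordinates,
pairing equal symbols. -/
def IsMatch (a b : List σ) (I : List (ℕ × ℕ)) : Prop :=
  I.Chain' (fun p q => p.1 < q.1 ∧ p.2 < q.2) ∧
  ∀ p ∈ I, p.1 < a.length ∧ p.2 < b.length ∧ a[p.1]? = b[p.2]?

/-- The largest cardinality of a match between `a` and `b`. -/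
noncomputable def maxMatch (a b : List σ) : ℕ :=
  sSup {r | ∃ I, IsMatch a b I ∧ I.length = r}

/-- The `f̄` distance between two strings. -/
noncomputable def fbar (a b : List σ) : ℝ :=
  1 - 2 * (maxMatch a b : ℝ) / (a.length + b.length)

/-- `I` is an approximate match between the strings `a` and `b` (0-based indices):
pairs of indices, nondecreasing in each coordinate and strictly increasing as pairs,
pairing equal symbols, such that the set of indices paired with any given index is
contained in a set of three consecutive indices. -/
def IsApproxMatch (a b : List σ) (I : List (ℕ × ℕ)) : Prop :=
  I.Chain' (fun p q => p.1 ≤ q.1 ∧ p.2 ≤ q.2 ∧ p ≠ q) ∧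
  (∀ p ∈ I, p.1 < a.length ∧ p.2 < b.length ∧ a[p.1]? = b[p.2]?) ∧
  (∀ p ∈ I, (∃ s, ∀ q ∈ I, q.1 = p.1 → q.2 ∈ ({s, s+1, s+2} : Set ℕ)) ∧
            (∃ t, ∀ q ∈ I, q.2 = p.2 → q.1 ∈ ({t, t+1, t+2} : Set ℕ)))

/-- The largest cardinality of an approximate match between `a` and `b`. -/
noncomputable def maxApproxMatch (a b : List σ) : ℕ :=
  sSup {r | ∃ I, IsApproxMatch a b I ∧ I.length = r}

/-- The approximate distance `f̃` between two strings. -/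
noncomputable def ftilde (a b : List σ) : ℝ :=
  max 0 (1 - 2 * (maxApproxMatch a b : ℝ) / (a.length + b.length))

end Paper

open Paper List

/-!
Take a maximal match between the concatenations and group its pairs by the pair of blocks
`(i, j)` containing them. Along the match the groups follow each other, so the blocks visited form
a chain in the product order (at most `n + m - 1` of them), and the intervals of positions spanned
by the groups are disjoint, of total length at most `nL` in `A(a)` and `mL` in `A(b)`.
A group spanning `c × d` positions has at most `min c d` pairs. If `a_i ≠ b_j` and `c, d ≥ L/R`,
the hypothesis bounds it by `(1 - α)(c + d)/2`, so such a group costs at most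
`(1 - α)(c + d)/2 + L/R`; a group with `a_i = b_j` costs at most `(1 - α)(c + d)/2 + α min c d`.
Removing the least block of the chain of equal-symbol blocks together with the blocks in its row or
column (they all lie in one line, whose intervals have total length at most `L`) shows that the
terms `α min c d` add up to at most `α L` times the length of a match between `a` and `b`.
Summing up, `f̄(A(a), A(b)) > α f̄(a, b) − 2/R`, and `f̃ ≤ f̄`.
-/

namespace Paper

variable {σ Λ : Type*}

def StrictlyBelow (p q : ℕ × ℕ) : Prop := p.1 < q.1 ∧ p.2 < q.2

instance : DecidableRel StrictlyBelow := fun p q =>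
  inferInstanceAs (Decidable (p.1 < q.1 ∧ p.2 < q.2))

instance : Trans StrictlyBelow StrictlyBelow StrictlyBelow :=
  ⟨fun h₁ h₂ => ⟨h₁.1.trans h₂.1, h₁.2.trans h₂.2⟩⟩

theorem StrictlyBelow.trichotomous {I : List (ℕ × ℕ)} (hI : I.Pairwise StrictlyBelow)
    {p q : ℕ × ℕ} (hp : p ∈ I) (hq : q ∈ I) :
    p = q ∨ StrictlyBelow p q ∨ StrictlyBelow q p := by
  have : Std.Symm fun p q => p = q ∨ StrictlyBelow p q ∨ StrictlyBelow q p :=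
    ⟨fun _ _ h => by rcases h with h | h | h <;> simp [h, eq_comm]⟩
  by_cases hpq : p = q
  · exact Or.inl hpq
  · exact (hI.imp (S := fun p q => p = q ∨ StrictlyBelow p q ∨ StrictlyBelow q p)
      fun h => Or.inr (Or.inl h)).forall hp hq hpq

theorem StrictlyBelow.eq_of_fst_eq {I : List (ℕ × ℕ)} (hI : I.Pairwise StrictlyBelow)
    {p q : ℕ × ℕ} (hp : p ∈ I) (hq : q ∈ I) (h : p.1 = q.1) : p = q := by
  rcases StrictlyBelow.trichotomous hI hp hq with rfl | ⟨h', -⟩ | ⟨h', -⟩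
  · rfl
  all_goals omega

theorem StrictlyBelow.eq_of_snd_eq {I : List (ℕ × ℕ)} (hI : I.Pairwise StrictlyBelow)
    {p q : ℕ × ℕ} (hp : p ∈ I) (hq : q ∈ I) (h : p.2 = q.2) : p = q := by
  rcases StrictlyBelow.trichotomous hI hp hq with rfl | ⟨-, h'⟩ | ⟨-, h'⟩
  · rfl
  all_goals omega

theorem isMatch_iff {a b : List σ} {I : List (ℕ × ℕ)} :
    IsMatch a b I ↔ I.Pairwise StrictlyBelow ∧
      ∀ p ∈ I, p.1 < a.length ∧ p.2 < b.length ∧ a[p.1]? = b[p.2]? :=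
  and_congr_left' (List.isChain_iff_pairwise (R := StrictlyBelow))

theorem IsMatch.pairwise {a b : List σ} {I : List (ℕ × ℕ)} (h : IsMatch a b I) :
    I.Pairwise StrictlyBelow :=
  (isMatch_iff.1 h).1

theorem IsMatch.sublist {a b : List σ} {I J : List (ℕ × ℕ)} (h : IsMatch a b I) (hJ : J <+ I) :
    IsMatch a b J :=
  isMatch_iff.2 ⟨h.pairwise.sublist hJ, fun p hp => h.2 p (hJ.subset hp)⟩

theorem IsMatch.swap {a b : List σ} {I : List (ℕ × ℕ)} (h : IsMatch a b I) :
    IsMatch b a (I.map Prod.swap) := by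
  refine isMatch_iff.2 ⟨List.pairwise_map.2 (h.pairwise.imp fun h => ⟨h.2, h.1⟩), ?_⟩
  simp only [List.mem_map, forall_exists_index, and_imp, forall_apply_eq_imp_iff₂]
  intro p hp
  obtain ⟨h₁, h₂, h₃⟩ := h.2 p hp
  exact ⟨h₂, h₁, h₃.symm⟩

theorem IsMatch.length_le_left {a b : List σ} {I : List (ℕ × ℕ)} (h : IsMatch a b I) :
    I.length ≤ a.length := by
  have hnodup : (I.map Prod.fst).Nodup :=
    (List.pairwise_map.2 (h.pairwise.imp fun h => h.1)).imp ne_of_lt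
  have hsub : I.map Prod.fst ⊆ List.range a.length := by
    intro x hx
    obtain ⟨p, hp, rfl⟩ := List.mem_map.1 hx
    exact List.mem_range.2 (h.2 p hp).1
  simpa using (hnodup.subperm hsub).length_le

theorem IsMatch.length_le_right {a b : List σ} {I : List (ℕ × ℕ)} (h : IsMatch a b I) :
    I.length ≤ b.length := by
  simpa using h.swap.length_le_left

theorem bddAbove_matchLengths (a b : List σ) :
    BddAbove {r | ∃ I, IsMatch a b I ∧ I.length = r} :=
  ⟨a.length, by rintro _ ⟨I, hI, rfl⟩; exact hI.length_le_left⟩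

theorem IsMatch.length_le_maxMatch {a b : List σ} {I : List (ℕ × ℕ)} (h : IsMatch a b I) :
    I.length ≤ maxMatch a b :=
  le_csSup (bddAbove_matchLengths a b) ⟨I, h, rfl⟩

theorem exists_isMatch_length_eq_maxMatch (a b : List σ) :
    ∃ I, IsMatch a b I ∧ I.length = maxMatch a b :=
  Nat.sSup_mem (s := {r | ∃ I, IsMatch a b I ∧ I.length = r})
    ⟨0, [], isMatch_iff.2 ⟨List.Pairwise.nil, by simp⟩, rfl⟩ (bddAbove_matchLengths a b)

theorem maxMatch_le_min (a b : List σ) : maxMatch a b ≤ min a.length b.length := by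
  obtain ⟨I, hI, hlen⟩ := exists_isMatch_length_eq_maxMatch a b
  exact hlen ▸ le_min hI.length_le_left hI.length_le_right

theorem IsMatch.isApproxMatch {a b : List σ} {I : List (ℕ × ℕ)} (h : IsMatch a b I) :
    IsApproxMatch a b I := by
  refine ⟨h.1.imp fun p q hpq => ⟨hpq.1.le, hpq.2.le, fun h => by simp [h] at hpq⟩, h.2,
    fun p hp => ⟨⟨p.2, fun q hq hqp => ?_⟩, ⟨p.1, fun q hq hqp => ?_⟩⟩⟩
  · simp [StrictlyBelow.eq_of_fst_eq h.pairwise hq hp hqp]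
  · simp [StrictlyBelow.eq_of_snd_eq h.pairwise hq hp hqp]

theorem IsApproxMatch.length_le {a b : List σ} {I : List (ℕ × ℕ)} (h : IsApproxMatch a b I) :
    I.length ≤ a.length * b.length := by
  classical
  have : Trans (fun p q : ℕ × ℕ => p.1 ≤ q.1 ∧ p.2 ≤ q.2 ∧ p ≠ q)
      (fun p q => p.1 ≤ q.1 ∧ p.2 ≤ q.2 ∧ p ≠ q) (fun p q => p.1 ≤ q.1 ∧ p.2 ≤ q.2 ∧ p ≠ q) :=
    ⟨fun h₁ h₂ => ⟨h₁.1.trans h₂.1, h₁.2.1.trans h₂.2.1, fun h => h₁.2.2 (Prod.ext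
      (le_antisymm h₁.1 (h ▸ h₂.1)) (le_antisymm h₁.2.1 (h ▸ h₂.2.1)))⟩⟩
  have hnodup : I.Nodup := (List.isChain_iff_pairwise.1 h.1).imp fun h => h.2.2
  rw [← List.toFinset_card_of_nodup hnodup, ← Finset.card_range a.length,
    ← Finset.card_range b.length, ← Finset.card_product]
  refine Finset.card_le_card fun p hp => ?_
  obtain ⟨h₁, h₂, -⟩ := h.2.1 p (List.mem_toFinset.1 hp)
  simpa using ⟨h₁, h₂⟩

theorem maxMatch_le_maxApproxMatch (a b : List σ) : maxMatch a b ≤ maxApproxMatch a b := by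
  obtain ⟨I, hI, hlen⟩ := exists_isMatch_length_eq_maxMatch a b
  exact hlen ▸ le_csSup ⟨a.length * b.length, by rintro _ ⟨J, hJ, rfl⟩; exact hJ.length_le⟩
    ⟨I, hI.isApproxMatch, rfl⟩

theorem fbar_nonneg (a b : List σ) : 0 ≤ fbar a b := by
  have h := maxMatch_le_min a b
  have h₁ : (maxMatch a b : ℝ) ≤ a.length := by exact_mod_cast h.trans (min_le_left _ _)
  have h₂ : (maxMatch a b : ℝ) ≤ b.length := by exact_mod_cast h.trans (min_le_right _ _)
  rw [fbar, sub_nonneg]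
  exact div_le_one_of_le₀ (by linarith) (by positivity)

theorem fbar_eq_one {a b : List σ} (h : a = [] ∨ b = []) : fbar a b = 1 := by
  have := maxMatch_le_min a b
  rcases h with rfl | rfl <;> simp_all [fbar]

theorem ftilde_le_fbar (a b : List σ) : ftilde a b ≤ fbar a b := by
  refine max_le (fbar_nonneg a b) (sub_le_sub_left ?_ 1)
  gcongr
  exact maxMatch_le_maxApproxMatch a b

theorem maxMatch_le_of_le_fbar {a b : List σ} {α : ℝ} (h : α ≤ fbar a b) :
    (maxMatch a b : ℝ) ≤ (1 - α) * (a.length + b.length) / 2 := by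
  rcases (Nat.zero_le (a.length + b.length)).eq_or_lt with hT | hT
  · obtain ⟨ha, hb⟩ : a.length = 0 ∧ b.length = 0 := by omega
    have := maxMatch_le_min a b
    simp_all
  · have hT : (0 : ℝ) < a.length + b.length := by exact_mod_cast hT
    rw [fbar, le_sub_iff_add_le, ← le_sub_iff_add_le', div_le_iff₀ hT] at h
    linarith

theorem IsMatch.length_le_maxMatch_window {u v : List σ} {G : List (ℕ × ℕ)} (hG : IsMatch u v G)
    {lo₁ c₁ lo₂ c₂ : ℕ}
    (hwin : ∀ p ∈ G, p.1 ∈ Finset.Ico lo₁ (lo₁ + c₁) ∧ p.2 ∈ Finset.Ico lo₂ (lo₂ + c₂)) :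
    G.length ≤ maxMatch ((u.drop lo₁).take c₁) ((v.drop lo₂).take c₂) := by
  simp only [Finset.mem_Ico] at hwin
  have hshift : IsMatch ((u.drop lo₁).take c₁) ((v.drop lo₂).take c₂)
      (G.map fun p => (p.1 - lo₁, p.2 - lo₂)) := by
    refine isMatch_iff.2 ⟨List.pairwise_map.2 (hG.pairwise.imp_of_mem fun hp hq hpq => ?_), ?_⟩
    · have hp' := hwin _ hp
      have hq' := hwin _ hq
      obtain ⟨h₁, h₂⟩ := hpq
      exact ⟨by simp only; omega, by simp only; omega⟩
    · simp only [List.mem_map, forall_exists_index, and_imp, forall_apply_eq_imp_iff₂]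
      intro p hp
      obtain ⟨h₁, h₂, h₃⟩ := hG.2 p hp
      have := hwin p hp
      refine ⟨by simp; omega, by simp; omega, ?_⟩
      simp only [List.getElem?_take, List.getElem?_drop]
      rw [if_pos (by omega), if_pos (by omega), Nat.add_sub_cancel' (by omega),
        Nat.add_sub_cancel' (by omega), h₃]
  simpa using hshift.length_le_maxMatch

theorem length_flatten_map_of_length_eq {A : σ → List Λ} {L : ℕ} (hA : ∀ s, (A s).length = L)
    (a : List σ) : (a.map A).flatten.length = a.length * L := by
  simp [List.length_flatten, List.map_map, Function.comp_def, hA]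

theorem take_drop_flatten_map {A : σ → List Λ} {L : ℕ} (hA : ∀ s, (A s).length = L)
    {a : List σ} {i lo c : ℕ} (hi : i < a.length) (hlo : i * L ≤ lo) (hc : lo + c ≤ i * L + L) :
    (((a.map A).flatten).drop lo).take c = ((A a[i]).drop (lo - i * L)).take c := by
  have hpre : ((a.take i).map A).flatten.length = i * L := by
    rw [length_flatten_map_of_length_eq hA, List.length_take_of_le hi.le]
  conv_lhs => rw [← List.take_append_drop i a, ← List.getElem_cons_drop hi]
  rw [List.map_append, List.flatten_append, List.map_cons, List.flatten_cons, List.drop_append,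
    List.drop_eq_nil_of_le (by omega), List.nil_append, hpre,
    List.drop_append_of_le_length (by rw [hA]; omega),
    List.take_append_of_le_length (by rw [List.length_drop, hA]; omega)]

theorem IsMatch.length_le_min_of_window {u v : List σ} {G : List (ℕ × ℕ)} (hG : IsMatch u v G)
    {lo₁ c₁ lo₂ c₂ : ℕ}
    (hwin : ∀ p ∈ G, p.1 ∈ Finset.Ico lo₁ (lo₁ + c₁) ∧ p.2 ∈ Finset.Ico lo₂ (lo₂ + c₂)) :
    G.length ≤ min c₁ c₂ := by
  refine (hG.length_le_maxMatch_window hwin).trans ((maxMatch_le_min _ _).trans ?_)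
  exact min_le_min (List.length_take_le _ _) (List.length_take_le _ _)

theorem length_le_of_isMatch_window_flatten {A : σ → List Λ} {L : ℕ} (hA : ∀ s, (A s).length = L)
    {a b : List σ} {α R : ℝ} (hα : α ≤ 1) (hR : 0 ≤ R)
    (hsep : ∀ s ∈ a, ∀ t ∈ b, s ≠ t → ∀ C D : List Λ, C <:+: A s → D <:+: A t →
      (L : ℝ) / R ≤ C.length → (L : ℝ) / R ≤ D.length → α ≤ fbar C D)
    {G : List (ℕ × ℕ)} (hG : IsMatch (a.map A).flatten (b.map A).flatten G)
    {i j lo₁ c₁ lo₂ c₂ : ℕ} (hi : i < a.length) (hj : j < b.length) (hab : a[i]? ≠ b[j]?)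
    (hwin : ∀ p ∈ G, p.1 ∈ Finset.Ico lo₁ (lo₁ + c₁) ∧ p.2 ∈ Finset.Ico lo₂ (lo₂ + c₂))
    (hlo₁ : i * L ≤ lo₁) (hc₁ : lo₁ + c₁ ≤ i * L + L)
    (hlo₂ : j * L ≤ lo₂) (hc₂ : lo₂ + c₂ ≤ j * L + L) :
    (G.length : ℝ) ≤ (1 - α) * (c₁ + c₂) / 2 + L / R := by
  have hLR : 0 ≤ (L : ℝ) / R := by positivity
  by_cases hlong : (L : ℝ) / R ≤ c₁ ∧ (L : ℝ) / R ≤ c₂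
  · have hGM := hG.length_le_maxMatch_window hwin
    rw [take_drop_flatten_map hA hi hlo₁ hc₁, take_drop_flatten_map hA hj hlo₂ hc₂] at hGM
    set C := ((A a[i]).drop (lo₁ - i * L)).take c₁
    set D := ((A b[j]).drop (lo₂ - j * L)).take c₂
    have hC : C.length = c₁ := by simp only [C, List.length_take, List.length_drop, hA]; omega
    have hD : D.length = c₂ := by simp only [D, List.length_take, List.length_drop, hA]; omega
    have hfbar : α ≤ fbar C D :=
      hsep _ (List.getElem_mem hi) _ (List.getElem_mem hj)
        (fun h => hab (by rw [List.getElem?_eq_getElem hi, List.getElem?_eq_getElem hj, h]))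
        C D ((List.take_prefix _ _).isInfix.trans (List.drop_suffix _ _).isInfix)
        ((List.take_prefix _ _).isInfix.trans (List.drop_suffix _ _).isInfix)
        (hC ▸ hlong.1) (hD ▸ hlong.2)
    have hM := maxMatch_le_of_le_fbar hfbar
    rw [hC, hD] at hM
    have : (G.length : ℝ) ≤ maxMatch C D := by exact_mod_cast hGM
    linarith
  · have hGmin : (G.length : ℝ) ≤ min (c₁ : ℝ) c₂ := by
      exact_mod_cast hG.length_le_min_of_window hwin
    have hshort : (min c₁ c₂ : ℝ) ≤ L / R := by
      rw [not_and_or, not_le, not_le] at hlong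
      rcases hlong with h | h
      · exact (min_le_left _ _).trans h.le
      · exact (min_le_right _ _).trans h.le
    have : 0 ≤ (1 - α) * (c₁ + c₂) / 2 := by
      have : (0 : ℝ) ≤ 1 - α := by linarith
      positivity
    linarith

theorem card_le_of_isChain {S : Finset (ℕ × ℕ)} (hS : IsChain (· ≤ ·) (S : Set (ℕ × ℕ)))
    {n m : ℕ} (hsub : ∀ β ∈ S, β.1 < n ∧ β.2 < m) : S.card ≤ n + m - 1 := by
  have hinj : Set.InjOn (fun β : ℕ × ℕ => β.1 + β.2) S := by
    intro β hβ β' hβ' h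
    simp only at h
    rcases hS.total hβ hβ' with h' | h' <;> rw [Prod.le_def] at h' <;> ext <;> omega
  calc S.card ≤ (Finset.range (n + m - 1)).card :=
        Finset.card_le_card_of_injOn _ (fun β hβ => by
          have := hsub β hβ
          simp only [Finset.coe_range, Set.mem_Iio]
          omega) hinj
    _ = n + m - 1 := Finset.card_range _

theorem exists_pairwise_strictlyBelow_sum_le {E : Finset (ℕ × ℕ)}
    (hE : IsChain (· ≤ ·) (E : Set (ℕ × ℕ))) {w : ℕ × ℕ → ℕ} {K : ℕ}
    (hrow : ∀ u, ∑ β ∈ E with β.1 = u, w β ≤ K) (hcol : ∀ v, ∑ β ∈ E with β.2 = v, w β ≤ K) :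
    ∃ J : List (ℕ × ℕ), J.Pairwise StrictlyBelow ∧ (∀ β ∈ J, β ∈ E) ∧
      ∑ β ∈ E, w β ≤ K * J.length := by
  induction E using Finset.strongInduction with
  | H E ih =>
  rcases E.eq_empty_or_nonempty with rfl | hne
  · exact ⟨[], List.Pairwise.nil, by simp, by simp⟩
  obtain ⟨β₀, hβ₀, hmin⟩ := E.exists_min_image (fun β => β.1 + β.2) hne
  have hβ₀_le : ∀ β ∈ E, β₀ ≤ β := by
    intro β hβ
    have := hmin β hβ
    rcases hE.total hβ₀ hβ with h | h <;> rw [Prod.le_def] at h ⊢ <;> omega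
  -- A chain cannot leave `β₀` both along its row and along its column.
  have hline : E.filter (fun β => ¬ StrictlyBelow β₀ β) ⊆ E.filter (·.1 = β₀.1) ∨
      E.filter (fun β => ¬ StrictlyBelow β₀ β) ⊆ E.filter (·.2 = β₀.2) := by
    simp only [Finset.subset_iff, Finset.mem_filter, StrictlyBelow]
    by_contra! h
    obtain ⟨⟨x, hx, hx₁⟩, ⟨y, hy, hy₂⟩⟩ := h
    obtain ⟨hxE, hx⟩ := Finset.mem_filter.1 hx
    obtain ⟨hyE, hy⟩ := Finset.mem_filter.1 hy
    have hx₀ := hβ₀_le x hxE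
    have hy₀ := hβ₀_le y hyE
    specialize hx₁ hxE
    specialize hy₂ hyE
    rcases hE.total hxE hyE with h | h <;> rw [Prod.le_def] at h hx₀ hy₀ <;> omega
  have hline_sum : ∑ β ∈ E with ¬ StrictlyBelow β₀ β, w β ≤ K := by
    rcases hline with h | h
    · exact (Finset.sum_le_sum_of_subset h).trans (hrow _)
    · exact (Finset.sum_le_sum_of_subset h).trans (hcol _)
  set E' := E.filter (StrictlyBelow β₀)
  have hE' : E' ⊂ E := Finset.filter_ssubset.2 ⟨β₀, hβ₀, fun h => (lt_irrefl _ h.1)⟩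
  have hsub : ∀ p : ℕ × ℕ → Prop, [DecidablePred p] → E'.filter p ⊆ E.filter p :=
    fun _ _ => Finset.filter_subset_filter _ (Finset.filter_subset _ _)
  obtain ⟨J, hJ, hJE', hJsum⟩ := ih E' hE' (hE.mono (Finset.filter_subset _ _))
    (fun u => (Finset.sum_le_sum_of_subset (hsub _)).trans (hrow u))
    (fun v => (Finset.sum_le_sum_of_subset (hsub _)).trans (hcol v))
  refine ⟨β₀ :: J, List.pairwise_cons.2 ⟨fun β hβ => (Finset.mem_filter.1 (hJE' β hβ)).2, hJ⟩,
    ?_, ?_⟩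
  · simp only [List.mem_cons, forall_eq_or_imp]
    exact ⟨hβ₀, fun β hβ => (Finset.mem_filter.1 (hJE' β hβ)).1⟩
  · rw [← Finset.sum_filter_add_sum_filter_not E (StrictlyBelow β₀), List.length_cons]
    linarith

def ordHull (X : Finset ℕ) : Finset ℕ := X.biUnion fun x => X.biUnion fun y => Finset.Icc x y

theorem mem_ordHull {X : Finset ℕ} {z : ℕ} :
    z ∈ ordHull X ↔ ∃ x ∈ X, ∃ y ∈ X, x ≤ z ∧ z ≤ y := by
  simp [ordHull]

theorem subset_ordHull (X : Finset ℕ) : X ⊆ ordHull X :=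
  fun x hx => mem_ordHull.2 ⟨x, hx, x, hx, le_rfl, le_rfl⟩

theorem ordHull_subset_Ico {X : Finset ℕ} {a b : ℕ} (h : ∀ x ∈ X, a ≤ x ∧ x < b) :
    ordHull X ⊆ Finset.Ico a b := by
  intro z hz
  obtain ⟨x, hx, y, hy, hxz, hzy⟩ := mem_ordHull.1 hz
  exact Finset.mem_Ico.2 ⟨(h x hx).1.trans hxz, hzy.trans_lt (h y hy).2⟩

theorem exists_ordHull_eq_Ico {X : Finset ℕ} (hX : X.Nonempty) :
    ∃ lo, ordHull X = Finset.Ico lo (lo + (ordHull X).card) := by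
  have : ordHull X = Finset.Ico (X.min' hX) (X.max' hX + 1) := by
    ext z
    rw [mem_ordHull, Finset.mem_Ico]
    constructor
    · rintro ⟨x, hx, y, hy, hxz, hzy⟩
      exact ⟨(X.min'_le x hx).trans hxz, Nat.lt_succ_of_le (hzy.trans (X.le_max' y hy))⟩
    · rintro ⟨h₁, h₂⟩
      exact ⟨_, X.min'_mem hX, _, X.max'_mem hX, h₁, Nat.le_of_lt_succ h₂⟩
  refine ⟨X.min' hX, ?_⟩
  rw [this, Nat.card_Ico, Nat.add_sub_cancel' ((X.min'_le_max' hX).trans (Nat.le_succ _))]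

def block (L : ℕ) (p : ℕ × ℕ) : ℕ × ℕ := (p.1 / L, p.2 / L)

theorem block_mono {L : ℕ} {p q : ℕ × ℕ} (h : p ≤ q) : block L p ≤ block L q :=
  ⟨Nat.div_le_div_right h.1, Nat.div_le_div_right h.2⟩

def blocks (L : ℕ) (I : List (ℕ × ℕ)) : Finset (ℕ × ℕ) := (I.map (block L)).toFinset

def blockGroup (L : ℕ) (I : List (ℕ × ℕ)) (β : ℕ × ℕ) : List (ℕ × ℕ) :=
  I.filter (block L · = β)

def blockHull (L : ℕ) (I : List (ℕ × ℕ)) (f : ℕ × ℕ → ℕ) (β : ℕ × ℕ) : Finset ℕ :=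
  ordHull ((blockGroup L I β).map f).toFinset

section Blocks

variable {L : ℕ} {I : List (ℕ × ℕ)}

theorem mem_blockGroup {β p : ℕ × ℕ} : p ∈ blockGroup L I β ↔ p ∈ I ∧ block L p = β := by
  simp [blockGroup]

theorem length_eq_sum_length_blockGroup (L : ℕ) (I : List (ℕ × ℕ)) :
    I.length = ∑ β ∈ blocks L I, (blockGroup L I β).length := by
  have := Multiset.toFinset_sum_count_eq (I.map (block L) : Multiset (ℕ × ℕ))
  rw [Multiset.coe_card, List.length_map] at this
  rw [← this]
  refine Finset.sum_congr rfl fun β _ => ?_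
  rw [← Multiset.map_coe, Multiset.count_map, Multiset.filter_coe, Multiset.coe_card, blockGroup]
  simp only [eq_comm]

theorem strictlyBelow_of_block_lt (hI : I.Pairwise StrictlyBelow) {p q : ℕ × ℕ}
    (hp : p ∈ I) (hq : q ∈ I) (h : block L p < block L q) : StrictlyBelow p q := by
  rcases StrictlyBelow.trichotomous hI hp hq with rfl | hpq | hqp
  · exact absurd h (lt_irrefl _)
  · exact hpq
  · exact absurd (block_mono ⟨hqp.1.le, hqp.2.le⟩) h.not_ge

theorem isChain_blocks (hI : I.Pairwise StrictlyBelow) :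
    IsChain (· ≤ ·) (blocks L I : Set (ℕ × ℕ)) := by
  intro β hβ β' hβ' _
  simp only [blocks, List.coe_toFinset, List.mem_map, Set.mem_ofPred_eq] at hβ hβ'
  obtain ⟨p, hp, rfl⟩ := hβ
  obtain ⟨q, hq, rfl⟩ := hβ'
  rcases StrictlyBelow.trichotomous hI hp hq with rfl | hpq | hqp
  · exact Or.inl le_rfl
  · exact Or.inl (block_mono ⟨hpq.1.le, hpq.2.le⟩)
  · exact Or.inr (block_mono ⟨hqp.1.le, hqp.2.le⟩)

theorem disjoint_blockHull (hI : I.Pairwise StrictlyBelow) {f : ℕ × ℕ → ℕ}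
    (hf : ∀ p q, StrictlyBelow p q → f p < f q) {β β' : ℕ × ℕ} (hβ : β ∈ blocks L I)
    (hβ' : β' ∈ blocks L I) (hne : β ≠ β') :
    Disjoint (blockHull L I f β) (blockHull L I f β') := by
  have key : ∀ β β', β < β' → Disjoint (blockHull L I f β) (blockHull L I f β') := by
    intro β β' hlt
    refine Finset.disjoint_left.2 fun z hz hz' => ?_
    simp only [blockHull, mem_ordHull, List.mem_toFinset, List.mem_map, mem_blockGroup] at hz hz'
    obtain ⟨-, -, _, ⟨q, ⟨hq, rfl⟩, rfl⟩, -, hzq⟩ := hz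
    obtain ⟨_, ⟨p, ⟨hp, rfl⟩, rfl⟩, -, -, hpz, -⟩ := hz'
    have := hf q p (strictlyBelow_of_block_lt hI hq hp hlt)
    omega
  rcases (isChain_blocks hI).total hβ hβ' with h | h
  · exact key β β' (lt_of_le_of_ne h hne)
  · exact (key β' β (lt_of_le_of_ne h hne.symm)).symm

theorem sum_card_blockHull_le (hI : I.Pairwise StrictlyBelow) {f : ℕ × ℕ → ℕ}
    (hf : ∀ p q, StrictlyBelow p q → f p < f q) {T : Finset (ℕ × ℕ)} (hT : T ⊆ blocks L I)
    {W : Finset ℕ} (hW : ∀ β ∈ T, blockHull L I f β ⊆ W) :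
    ∑ β ∈ T, (blockHull L I f β).card ≤ W.card := by
  rw [← Finset.card_biUnion fun β hβ β' hβ' hne => disjoint_blockHull hI hf (hT hβ) (hT hβ') hne]
  exact Finset.card_le_card (Finset.biUnion_subset.2 hW)

theorem blockHull_subset_Ico (hL : 0 < L) {f : ℕ × ℕ → ℕ} (hf : ∀ p, f (block L p) = f p / L)
    (β : ℕ × ℕ) : blockHull L I f β ⊆ Finset.Ico (f β * L) (f β * L + L) := by
  refine ordHull_subset_Ico fun x hx => ?_
  simp only [List.mem_toFinset, List.mem_map, mem_blockGroup] at hx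
  obtain ⟨p, ⟨-, rfl⟩, rfl⟩ := hx
  rw [hf]
  exact ⟨Nat.div_mul_le_self _ _, Nat.lt_div_mul_add hL⟩

theorem blockHull_subset_range {f : ℕ × ℕ → ℕ} {N : ℕ} (hN : ∀ p ∈ I, f p < N) (β : ℕ × ℕ) :
    blockHull L I f β ⊆ Finset.range N := by
  rw [Finset.range_eq_Ico]
  refine ordHull_subset_Ico fun x hx => ?_
  simp only [List.mem_toFinset, List.mem_map, mem_blockGroup] at hx
  obtain ⟨p, ⟨hp, -⟩, rfl⟩ := hx
  exact ⟨Nat.zero_le _, hN p hp⟩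

theorem exists_window_blockGroup (hL : 0 < L) {f : ℕ × ℕ → ℕ} (hf : ∀ p, f (block L p) = f p / L)
    {β : ℕ × ℕ} (hβ : β ∈ blocks L I) :
    ∃ lo, (∀ p ∈ blockGroup L I β, f p ∈ Finset.Ico lo (lo + (blockHull L I f β).card)) ∧
      f β * L ≤ lo ∧ lo + (blockHull L I f β).card ≤ f β * L + L := by
  have hne : ((blockGroup L I β).map f).toFinset.Nonempty := by
    obtain ⟨p, hp, rfl⟩ := List.mem_map.1 (List.mem_toFinset.1 hβ)
    exact ⟨f p, List.mem_toFinset.2 (List.mem_map_of_mem (mem_blockGroup.2 ⟨hp, rfl⟩))⟩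
  obtain ⟨lo, hlo⟩ := exists_ordHull_eq_Ico hne
  set c := (blockHull L I f β).card
  have hwin : blockHull L I f β = Finset.Ico lo (lo + c) := hlo
  have hpos : 0 < c := Finset.card_pos.2 (hne.mono (subset_ordHull _))
  refine ⟨lo, fun p hp => hwin ▸ subset_ordHull _ (List.mem_toFinset.2 (List.mem_map_of_mem hp)),
    (Finset.Ico_subset_Ico_iff (by omega)).1 (hwin ▸ blockHull_subset_Ico hL hf β)⟩

theorem sum_card_blockHull_le_of_lt (hI : I.Pairwise StrictlyBelow) {f : ℕ × ℕ → ℕ}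
    (hf : ∀ p q, StrictlyBelow p q → f p < f q) {N : ℕ} (hN : ∀ p ∈ I, f p < N) :
    ∑ β ∈ blocks L I, (blockHull L I f β).card ≤ N := by
  simpa using sum_card_blockHull_le hI hf subset_rfl fun β _ => blockHull_subset_range hN β

theorem sum_card_blockHull_filter_le (hI : I.Pairwise StrictlyBelow) (hL : 0 < L)
    {f : ℕ × ℕ → ℕ} (hf : ∀ p q, StrictlyBelow p q → f p < f q)
    (hf' : ∀ p, f (block L p) = f p / L) (u : ℕ) :
    ∑ β ∈ blocks L I with f β = u, (blockHull L I f β).card ≤ L := by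
  have := sum_card_blockHull_le hI hf (Finset.filter_subset (f · = u) _)
    (W := Finset.Ico (u * L) (u * L + L)) fun β hβ => (Finset.mem_filter.1 hβ).2 ▸
      blockHull_subset_Ico hL hf' β
  simpa using this

end Blocks

section Flatten

variable {A : σ → List Λ} {L : ℕ} {a b : List σ} {I : List (ℕ × ℕ)}

theorem IsMatch.lt_mul_of_flatten (hA : ∀ s, (A s).length = L)
    (hI : IsMatch (a.map A).flatten (b.map A).flatten I) {p : ℕ × ℕ} (hp : p ∈ I) :
    p.1 < a.length * L ∧ p.2 < b.length * L := by
  have := hI.2 p hp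
  rw [length_flatten_map_of_length_eq hA, length_flatten_map_of_length_eq hA] at this
  exact ⟨this.1, this.2.1⟩

theorem IsMatch.lt_length_of_mem_blocks (hA : ∀ s, (A s).length = L)
    (hI : IsMatch (a.map A).flatten (b.map A).flatten I) {β : ℕ × ℕ} (hβ : β ∈ blocks L I) :
    β.1 < a.length ∧ β.2 < b.length := by
  obtain ⟨p, hp, rfl⟩ := List.mem_map.1 (List.mem_toFinset.1 hβ)
  have := hI.lt_mul_of_flatten hA hp
  exact ⟨Nat.div_lt_of_lt_mul (by linarith), Nat.div_lt_of_lt_mul (by linarith)⟩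

theorem IsMatch.length_blockGroup_le [DecidableEq σ] (hL : 0 < L) (hA : ∀ s, (A s).length = L)
    {α R : ℝ} (hα : α ≤ 1) (hR : 0 ≤ R)
    (hsep : ∀ s ∈ a, ∀ t ∈ b, s ≠ t → ∀ C D : List Λ, C <:+: A s → D <:+: A t →
      (L : ℝ) / R ≤ C.length → (L : ℝ) / R ≤ D.length → α ≤ fbar C D)
    (hI : IsMatch (a.map A).flatten (b.map A).flatten I) {β : ℕ × ℕ} (hβ : β ∈ blocks L I) :
    ((blockGroup L I β).length : ℝ) ≤
      (1 - α) * ((blockHull L I Prod.fst β).card + (blockHull L I Prod.snd β).card) / 2 + L / R +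
      α * ((if a[β.1]? = b[β.2]? then
        min (blockHull L I Prod.fst β).card (blockHull L I Prod.snd β).card else 0 : ℕ) : ℝ) := by
  obtain ⟨lo₁, hwin₁, hlo₁, hc₁⟩ := exists_window_blockGroup hL (f := Prod.fst) (fun _ => rfl) hβ
  obtain ⟨lo₂, hwin₂, hlo₂, hc₂⟩ := exists_window_blockGroup hL (f := Prod.snd) (fun _ => rfl) hβ
  have hG : IsMatch _ _ (blockGroup L I β) := hI.sublist (List.filter_sublist ..)
  have hwin := fun p hp => And.intro (hwin₁ p hp) (hwin₂ p hp)
  have hLR : 0 ≤ (L : ℝ) / R := by positivity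
  split_ifs with hab
  · have := hG.length_le_min_of_window hwin
    have hmin : ((blockGroup L I β).length : ℝ) ≤
        min ((blockHull L I Prod.fst β).card : ℝ) (blockHull L I Prod.snd β).card := by
      exact_mod_cast this
    push_cast
    nlinarith [min_le_left ((blockHull L I Prod.fst β).card : ℝ) (blockHull L I Prod.snd β).card,
      min_le_right ((blockHull L I Prod.fst β).card : ℝ) (blockHull L I Prod.snd β).card]
  · have hβab := hI.lt_length_of_mem_blocks hA hβ
    have := length_le_of_isMatch_window_flatten hA hα hR hsep hG hβab.1 hβab.2 hab hwin
      hlo₁ hc₁ hlo₂ hc₂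
    push_cast
    linarith

theorem IsMatch.sum_min_card_blockHull_le [DecidableEq σ] (hL : 0 < L)
    (hA : ∀ s, (A s).length = L) (hI : IsMatch (a.map A).flatten (b.map A).flatten I) :
    ∑ β ∈ blocks L I with a[β.1]? = b[β.2]?,
      min (blockHull L I Prod.fst β).card (blockHull L I Prod.snd β).card ≤ L * maxMatch a b := by
  have hIp := hI.pairwise
  set E := (blocks L I).filter fun β => a[β.1]? = b[β.2]?
  have hsub : ∀ p : ℕ × ℕ → Prop, [DecidablePred p] → E.filter p ⊆ (blocks L I).filter p :=
    fun _ _ => Finset.filter_subset_filter _ (Finset.filter_subset _ _)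
  obtain ⟨J, hJ, hJE, hJsum⟩ := exists_pairwise_strictlyBelow_sum_le
    ((isChain_blocks hIp).mono (Finset.coe_subset.2 (Finset.filter_subset _ _)))
    (fun u => (Finset.sum_le_sum fun β _ => min_le_left _ _).trans
      ((Finset.sum_le_sum_of_subset (hsub _)).trans
        (sum_card_blockHull_filter_le hIp hL (fun _ _ h => h.1) (fun _ => rfl) u)))
    (fun v => (Finset.sum_le_sum fun β _ => min_le_right _ _).trans
      ((Finset.sum_le_sum_of_subset (hsub _)).trans
        (sum_card_blockHull_filter_le hIp hL (fun _ _ h => h.2) (fun _ => rfl) v)))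
  have hJm : IsMatch a b J := by
    refine isMatch_iff.2 ⟨hJ, fun β hβ => ?_⟩
    obtain ⟨hβS, hβE⟩ := Finset.mem_filter.1 (hJE β hβ)
    have := hI.lt_length_of_mem_blocks hA hβS
    exact ⟨this.1, this.2, hβE⟩
  exact hJsum.trans (Nat.mul_le_mul_left L hJm.length_le_maxMatch)

theorem IsMatch.length_le_of_flatten (hL : 0 < L) (hA : ∀ s, (A s).length = L) {α R : ℝ}
    (hα₀ : 0 ≤ α) (hα : α ≤ 1) (hR : 0 ≤ R)
    (hsep : ∀ s ∈ a, ∀ t ∈ b, s ≠ t → ∀ C D : List Λ, C <:+: A s → D <:+: A t →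
      (L : ℝ) / R ≤ C.length → (L : ℝ) / R ≤ D.length → α ≤ fbar C D)
    (hI : IsMatch (a.map A).flatten (b.map A).flatten I) :
    (I.length : ℝ) ≤ (1 - α) * ((a.length + b.length) * L) / 2
      + ((a.length + b.length - 1 : ℕ) : ℝ) * (L / R) + α * (L * maxMatch a b) := by
  classical
  set S := blocks L I
  set c := fun β => (blockHull L I Prod.fst β).card
  set d := fun β => (blockHull L I Prod.snd β).card
  have hcd : ∑ β ∈ S, c β + ∑ β ∈ S, d β ≤ (a.length + b.length) * L := by
    rw [add_mul]
    exact Nat.add_le_add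
      (sum_card_blockHull_le_of_lt hI.pairwise (fun _ _ h => h.1) fun p hp =>
        (hI.lt_mul_of_flatten hA hp).1)
      (sum_card_blockHull_le_of_lt hI.pairwise (fun _ _ h => h.2) fun p hp =>
        (hI.lt_mul_of_flatten hA hp).2)
  have hcard : S.card ≤ a.length + b.length - 1 :=
    card_le_of_isChain (isChain_blocks hI.pairwise) fun β hβ => hI.lt_length_of_mem_blocks hA hβ
  have hweight := hI.sum_min_card_blockHull_le hL hA
  have h1α : 0 ≤ 1 - α := by linarith
  calc (I.length : ℝ) = ∑ β ∈ S, ((blockGroup L I β).length : ℝ) := by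
        rw [length_eq_sum_length_blockGroup L I]; push_cast; rfl
    _ ≤ ∑ β ∈ S, ((1 - α) * (c β + d β) / 2 + L / R +
          α * ((if a[β.1]? = b[β.2]? then min (c β) (d β) else 0 : ℕ) : ℝ)) :=
        Finset.sum_le_sum fun β hβ => hI.length_blockGroup_le hL hA hα hR hsep hβ
    _ = (1 - α) * ((∑ β ∈ S, c β + ∑ β ∈ S, d β : ℕ) : ℝ) / 2 + (S.card : ℝ) * (L / R) +
          α * ((∑ β ∈ S with a[β.1]? = b[β.2]?, min (c β) (d β) : ℕ) : ℝ) := by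
        rw [Finset.sum_filter]
        push_cast
        rw [Finset.sum_add_distrib, Finset.sum_add_distrib, ← Finset.sum_div, ← Finset.mul_sum,
          ← Finset.mul_sum, Finset.sum_add_distrib, Finset.sum_const, nsmul_eq_mul]
    _ ≤ (1 - α) * ((a.length + b.length) * L) / 2
          + ((a.length + b.length - 1 : ℕ) : ℝ) * (L / R) + α * (L * maxMatch a b) := by
        gcongr
        · exact_mod_cast hcd
        · exact_mod_cast hweight

end Flatten

theorem mul_fbar_sub_lt_fbar_flatten {A : σ → List Λ} {L : ℕ} (hL : 0 < L)
    (hA : ∀ s, (A s).length = L) {a b : List σ} {α R : ℝ} (hα₀ : 0 ≤ α) (hα : α ≤ 1)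
    (hR : 0 < R)
    (hsep : ∀ s ∈ a, ∀ t ∈ b, s ≠ t → ∀ C D : List Λ, C <:+: A s → D <:+: A t →
      (L : ℝ) / R ≤ C.length → (L : ℝ) / R ≤ D.length → α ≤ fbar C D) :
    α * fbar a b - 2 / R < fbar (a.map A).flatten (b.map A).flatten := by
  have h2R : 0 < 2 / R := by positivity
  by_cases hnil : a = [] ∨ b = []
  · rw [fbar_eq_one hnil, fbar_eq_one (by rcases hnil with rfl | rfl <;> simp)]
    linarith
  rw [not_or, ← Ne, ← Ne, ← List.length_pos_iff, ← List.length_pos_iff] at hnil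
  obtain ⟨I, hI, hlen⟩ := exists_isMatch_length_eq_maxMatch (a.map A).flatten (b.map A).flatten
  have hM := hI.length_le_of_flatten hL hA hα₀ hα hR.le hsep
  set T : ℝ := a.length + b.length
  have hT : 2 ≤ T := by
    have ha : (1 : ℝ) ≤ a.length := by exact_mod_cast hnil.1
    have hb : (1 : ℝ) ≤ b.length := by exact_mod_cast hnil.2
    linarith
  have hLpos : (0 : ℝ) < L := by exact_mod_cast hL
  rw [Nat.cast_sub (by omega), Nat.cast_add, Nat.cast_one] at hM
  rw [fbar, fbar, length_flatten_map_of_length_eq hA, length_flatten_map_of_length_eq hA, ← hlen]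
  push_cast
  rw [← add_mul]
  set K : ℝ := (maxMatch a b : ℝ)
  have key :
      2 * (I.length : ℝ) / (T * L) ≤ (1 - α) + 2 * (T - 1) / (T * R) + α * (2 * K / T) := by
    rw [div_le_iff₀ (by positivity)]
    have : ((1 - α) + 2 * (T - 1) / (T * R) + α * (2 * K / T)) * (T * L)
        = (1 - α) * (T * L) + 2 * ((T - 1) * (L / R)) + 2 * (α * (L * K)) := by
      field_simp
    rw [this]
    linarith
  have hlt : 2 * (T - 1) / (T * R) < 2 / R := by
    rw [div_lt_div_iff₀ (by positivity) hR]
    nlinarith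
  have : α * (1 - 2 * K / T) = α - α * (2 * K / T) := by ring
  linarith

end Paper

/-- Let `A : Σ → Λ^L` assign to each symbol a block of length `L`, and
let `a, b` be strings over `Σ`. If `f̄(C,D) ≥ α` for all consecutive substrings `C` of
`A s` and `D` of `A t` with `s ≠ t` (`s` a symbol of `a`, `t` a symbol of `b`) and
`|C|, |D| ≥ L/R`, where `0 < α < 1/7` and `R > 0`, then
`f̄(A(a₁)⋯A(aₙ), A(b₁)⋯A(bₘ)) > α·f̃(a,b) − 2/R`. -/
theorem statement12 {σ Λ : Type*} (L : ℕ) (hL : 0 < L)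
    (A : σ → List Λ) (hA : ∀ s, (A s).length = L)
    (a b : List σ) (α R : ℝ) (hα : 0 < α) (hα' : α < 1/7) (hR : 0 < R)
    (hsep : ∀ s ∈ a, ∀ t ∈ b, s ≠ t → ∀ C D : List Λ, C <:+: A s → D <:+: A t →
      (L : ℝ) / R ≤ C.length → (L : ℝ) / R ≤ D.length → α ≤ fbar C D) :
    α * ftilde a b - 2 / R < fbar ((a.map A).flatten) ((b.map A).flatten) :=
  calc α * ftilde a b - 2 / R ≤ α * fbar a b - 2 / R := by
        gcongr
        exact ftilde_le_fbar a b
    _ < _ := mul_fbar_sub_lt_fbar_flatten hL hA hα.le (by linarith) hR hsep
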